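/- For every τ > 0 the matrix I − τ·A_{α,h} is invertible, all entries of (I − τ·A_{α,h})^{−1} are nonnegative, and the maximum absolute row-sum operator norm satisfies ‖(I − τ·A_{α,h})^{−1}‖_∞ = 1. Consequently the implicit Euler scheme u^{n+1} = (I − τ·A_{α,h})^{−1} u^n is unconditionally stable in the maximum norm: ‖u^n‖_∞ ≤ ‖u^0‖_∞ for all n. -/

import Mathlib

/-- The Grünwald--Letnikov coefficients `g_k(α) = (-1)^k C(α,k)`, where
`C(α,k) = α(α-1)⋯(α-k+1)/k!` is the generalized binomial coefficient. -/
noncomputable def glCoeff (α : ℝ) (k : ℕ) : ℝ :=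
  (-1 : ℝ) ^ k * ((∏ i ∈ Finset.range k, (α - i)) / (Nat.factorial k))

/-- The Neumann extension `v̂ : ℤ → ℝ` of a vector `v = (v_0, …, v_N) ∈ ℝ^{N+1}`:
`v̂_j = v_j` for `0 ≤ j ≤ N`, `v̂_{-1-j} = v̂_j`, and `v̂_{j+2(N+1)} = v̂_j`. -/
def neumannExt (N : ℕ) (v : Fin (N + 1) → ℝ) (j : ℤ) : ℝ :=
  if h : (j % (2 * (N + 1))).toNat ≤ N then
    v ⟨(j % (2 * (N + 1))).toNat, Nat.lt_succ_of_le h⟩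
  else
    v ⟨2 * N + 1 - (j % (2 * (N + 1))).toNat, by
      have h2 : j % (2 * (N + 1)) < 2 * (N + 1) := Int.emod_lt_of_pos j (by positivity)
      omega⟩

/-- The mesh size `h = 1/(N+1)`. -/
noncomputable def gridH (N : ℕ) : ℝ := 1 / ((N : ℝ) + 1)

/-- The grid points `x_j = π h (j + 1/2)`, `h = 1/(N+1)`. -/
noncomputable def gridX (N : ℕ) (j : ℕ) : ℝ := Real.pi * gridH N * ((j : ℝ) + 1 / 2)

/-- The action of the Grünwald--Letnikov discretization matrix `A_{α,h}` (with `h = 1/(N+1)`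
and `C_σ = -σ/(2 cos(απ/2))`) on a vector `v ∈ ℝ^{N+1}` via the Neumann extension:
`[A_{α,h} v]_j = (C_σ/h^α) Σ_{k=0}^∞ g_k(α) (v̂_{j+1-k} + v̂_{j-1+k})`. -/
noncomputable def Amul (α σ : ℝ) (N : ℕ) (v : Fin (N + 1) → ℝ) (j : Fin (N + 1)) : ℝ :=
  (-σ / (2 * Real.cos (α * Real.pi / 2)) / gridH N ^ α) *
    ∑' k : ℕ, glCoeff α k *
      (neumannExt N v ((j : ℤ) + 1 - (k : ℤ)) + neumannExt N v ((j : ℤ) - 1 + (k : ℤ)))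

/-- The matrix `A_{α,h} ∈ ℝ^{(N+1)×(N+1)}`, whose `m`-th column is the action of the
discretized operator on the `m`-th standard basis vector. -/
noncomputable def Amat (α σ : ℝ) (N : ℕ) : Matrix (Fin (N + 1)) (Fin (N + 1)) ℝ :=
  Matrix.of fun j m => Amul α σ N (fun i => if i = m then 1 else 0) j

/-- The eigenvalues `λ_k = -(σ/cos(απ/2)) (2/h)^α (sin(kπh/2))^α cos(kπh + (α/2)(π - kπh))`. -/
noncomputable def eigVal (α σ : ℝ) (N : ℕ) (k : ℕ) : ℝ :=
  -(σ / Real.cos (α * Real.pi / 2)) * (2 / gridH N) ^ α *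
    Real.sin ((k : ℝ) * Real.pi * gridH N / 2) ^ α *
    Real.cos ((k : ℝ) * Real.pi * gridH N + α / 2 * (Real.pi - (k : ℝ) * Real.pi * gridH N))

/-!
Write `M = I - τ A_{α,h}`. Off the diagonal, `A_{α,h}` only involves the coefficients
`g_k(α) ≥ 0` with `k ≠ 1`, multiplied by `C_σ / h^α > 0`; its row sums are
`2 (C_σ / h^α) Σ_k g_k(α) = 0`, because the partial sums `Σ_{k ≤ n} g_k(α) = g_n(α - 1)` tend
to `0`. So `M` has nonpositive off-diagonal entries and unit row sums, and for such a matrix the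
discrete minimum principle `min_i (M x)_i ≤ min_i x_i` gives `‖x‖_∞ ≤ ‖M x‖_∞`. Hence `M` is
invertible, `M⁻¹` preserves nonnegativity and contracts the maximum norm, and `M 1 = 1` gives
`M⁻¹ 1 = 1`.
-/

open Filter Topology Finset

lemma glCoeff_zero (α : ℝ) : glCoeff α 0 = 1 := by simp [glCoeff]

lemma glCoeff_succ (α : ℝ) (k : ℕ) :
    glCoeff α (k + 1) = glCoeff α k * ((k - α) / (k + 1)) := by
  simp only [glCoeff, pow_succ, prod_range_succ, Nat.factorial_succ]
  push_cast
  field_simp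
  ring

lemma glCoeff_one (α : ℝ) : glCoeff α 1 = -α := by
  rw [glCoeff_succ, glCoeff_zero]; norm_num

lemma glCoeff_succ_eq_sub (α : ℝ) (n : ℕ) :
    glCoeff α (n + 1) = glCoeff (α - 1) (n + 1) - glCoeff (α - 1) n := by
  have hprod : ∏ i ∈ range (n + 1), (α - i) = (∏ i ∈ range n, (α - 1 - i)) * α := by
    rw [prod_range_succ']
    push_cast
    simp only [sub_zero]
    congr 1
    exact prod_congr rfl fun i _ => by ring
  simp only [glCoeff, hprod, prod_range_succ, Nat.factorial_succ, pow_succ]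
  push_cast
  field_simp
  ring

lemma sum_range_succ_glCoeff (α : ℝ) (n : ℕ) :
    ∑ k ∈ range (n + 1), glCoeff α k = glCoeff (α - 1) n := by
  induction n with
  | zero => simp [glCoeff_zero]
  | succ n ih => rw [sum_range_succ, ih, glCoeff_succ_eq_sub]; ring

lemma glCoeff_nonneg_of_ne_one {α : ℝ} (h1 : 1 ≤ α) (h2 : α ≤ 2) {k : ℕ} (hk : k ≠ 1) :
    0 ≤ glCoeff α k := by
  rcases Nat.lt_or_ge k 2 with hk2 | hk2
  · obtain rfl : k = 0 := by omega
    simp [glCoeff_zero]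
  clear hk
  induction k, hk2 using Nat.le_induction with
  | base =>
    rw [glCoeff_succ, glCoeff_one]
    push_cast
    nlinarith
  | succ k hk ih =>
    have hk' : (2 : ℝ) ≤ k := by exact_mod_cast hk
    rw [glCoeff_succ]
    exact mul_nonneg ih (div_nonneg (by linarith) (by positivity))

/-- `n |g_n(β)|` is nonincreasing for `n ≥ 1` and starts at `|g_1(β)| = β`. -/
lemma succ_mul_abs_glCoeff_succ_le {β : ℝ} (h0 : 0 ≤ β) (h1 : β ≤ 1) (n : ℕ) :
    (n + 1) * |glCoeff β (n + 1)| ≤ β := by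
  induction n with
  | zero => simp [glCoeff_one, abs_of_nonneg h0]
  | succ n ih =>
    have hn : (0 : ℝ) ≤ n := n.cast_nonneg
    calc ((n + 1 : ℕ) + 1 : ℝ) * |glCoeff β (n + 1 + 1)|
        = (n + 1 - β) * |glCoeff β (n + 1)| := by
          rw [glCoeff_succ, abs_mul, abs_div,
            abs_of_nonneg (a := ((n + 1 : ℕ) : ℝ) - β) (by push_cast; linarith),
            abs_of_pos (a := ((n + 1 : ℕ) : ℝ) + 1) (by positivity)]
          push_cast
          field_simp
      _ ≤ (n + 1) * |glCoeff β (n + 1)| := by gcongr; linarith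
      _ ≤ β := ih

lemma tendsto_glCoeff_succ {β : ℝ} (h0 : 0 ≤ β) (h1 : β ≤ 1) :
    Tendsto (fun n => glCoeff β (n + 1)) atTop (𝓝 0) := by
  have hbound : Tendsto (fun n : ℕ => β / ((n + 1 : ℕ) : ℝ)) atTop (𝓝 0) :=
    (tendsto_add_atTop_iff_nat 1).2 (tendsto_const_div_atTop_nhds_zero_nat β)
  refine squeeze_zero_norm (fun n => ?_) hbound
  rw [Real.norm_eq_abs, le_div_iff₀ (by positivity), mul_comm]
  push_cast
  exact succ_mul_abs_glCoeff_succ_le h0 h1 n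

/-- Since `g_k(α) ≥ 0` for `k ≥ 2`, the series converges as soon as its partial sums do, and
these are `g_n(α - 1) → 0`. -/
lemma hasSum_glCoeff {α : ℝ} (h1 : 1 ≤ α) (h2 : α ≤ 2) : HasSum (glCoeff α) 0 := by
  rw [← hasSum_nat_add_iff' 2,
    hasSum_iff_tendsto_nat_of_nonneg fun i => glCoeff_nonneg_of_ne_one h1 h2 (by omega)]
  have hpartial (n : ℕ) :
      ∑ i ∈ range n, glCoeff α (i + 2) = glCoeff (α - 1) (n + 1) - (1 - α) := by
    have h := sum_range_succ_glCoeff α (n + 1)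
    rw [show n + 1 + 1 = 2 + n by omega, sum_range_add] at h
    simp only [sum_range_succ, sum_range_zero, glCoeff_zero, glCoeff_one] at h
    simp only [add_comm _ 2]
    linarith
  simp only [hpartial, sum_range_succ, sum_range_zero, glCoeff_zero, glCoeff_one]
  rw [show (0 : ℝ) - (0 + 1 + -α) = 0 - (1 - α) by ring]
  exact (tendsto_glCoeff_succ (by linarith) (by linarith)).sub_const (1 - α)

/-- The index in `{0, …, N}` that the Neumann extension reads at `j`. -/
def neumannIndex (N : ℕ) (j : ℤ) : Fin (N + 1) :=
  if h : (j % (2 * (N + 1))).toNat ≤ N then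
    ⟨(j % (2 * (N + 1))).toNat, Nat.lt_succ_of_le h⟩
  else
    ⟨2 * N + 1 - (j % (2 * (N + 1))).toNat, by
      have h2 : j % (2 * (N + 1)) < 2 * (N + 1) := Int.emod_lt_of_pos j (by positivity)
      omega⟩

lemma neumannExt_eq_apply_neumannIndex (N : ℕ) (v : Fin (N + 1) → ℝ) (j : ℤ) :
    neumannExt N v j = v (neumannIndex N j) := by
  unfold neumannExt neumannIndex
  split_ifs <;> rfl

lemma neumannIndex_natCast (N : ℕ) (j : Fin (N + 1)) : neumannIndex N (j : ℤ) = j := by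
  have hj := j.isLt
  have hmod : (j : ℤ) % (2 * (N + 1)) = j := Int.emod_eq_of_lt (by positivity) (by omega)
  unfold neumannIndex
  split_ifs with h
  · simp only [hmod, Int.toNat_natCast]
  · simp only [hmod, Int.toNat_natCast] at h
    omega

section GrunwaldLetnikovMatrix

variable {α : ℝ} {N : ℕ}

/-- `C_σ / h^α`. -/
noncomputable def amatScale (α σ : ℝ) (N : ℕ) : ℝ :=
  -σ / (2 * Real.cos (α * Real.pi / 2)) / gridH N ^ α

/-- The `k`-th term of the series defining the entry `(j, m)` of `A_{α,h} / (C_σ / h^α)`. -/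
noncomputable def amatTerm (α : ℝ) (N : ℕ) (j m : Fin (N + 1)) (k : ℕ) : ℝ :=
  glCoeff α k * ((if neumannIndex N ((j : ℤ) + 1 - k) = m then 1 else 0) +
    (if neumannIndex N ((j : ℤ) - 1 + k) = m then 1 else 0))

lemma Amat_apply (σ : ℝ) (j m : Fin (N + 1)) :
    Amat α σ N j m = amatScale α σ N * ∑' k, amatTerm α N j m k := by
  simp only [Amat, Matrix.of_apply, Amul, amatScale, amatTerm, neumannExt_eq_apply_neumannIndex]

lemma amatScale_pos {σ : ℝ} (h1 : 1 < α) (h2 : α ≤ 2) (hσ : 0 < σ) (N : ℕ) :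
    0 < amatScale α σ N := by
  have hcos : Real.cos (α * Real.pi / 2) < 0 :=
    Real.cos_neg_of_pi_div_two_lt_of_lt (by nlinarith [Real.pi_pos]) (by nlinarith [Real.pi_pos])
  have hh : 0 < gridH N := by unfold gridH; positivity
  exact div_pos (div_pos_of_neg_of_neg (by linarith) (by linarith)) (Real.rpow_pos_of_pos hh α)

lemma abs_amatTerm_le (j m : Fin (N + 1)) (k : ℕ) :
    |amatTerm α N j m k| ≤ 2 * |glCoeff α k| := by
  rw [amatTerm, abs_mul, mul_comm]
  gcongr
  rw [abs_le]
  constructor <;> split_ifs <;> norm_num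

lemma summable_amatTerm (h1 : 1 ≤ α) (h2 : α ≤ 2) (j m : Fin (N + 1)) :
    Summable (amatTerm α N j m) :=
  .of_norm_bounded ((summable_abs_iff.2 (hasSum_glCoeff h1 h2).summable).mul_left 2)
    (abs_amatTerm_le j m)

lemma sum_amatTerm (j : Fin (N + 1)) (k : ℕ) :
    ∑ m, amatTerm α N j m k = 2 * glCoeff α k := by
  simp only [amatTerm, ← mul_sum, sum_add_distrib, sum_ite_eq, mem_univ, if_true]
  ring

/-- The only negative coefficient `g_1(α) = -α` multiplies `v̂_j` twice, so it only reaches the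
diagonal. -/
lemma amatTerm_nonneg_of_ne (h1 : 1 ≤ α) (h2 : α ≤ 2) {j m : Fin (N + 1)} (hjm : j ≠ m)
    (k : ℕ) : 0 ≤ amatTerm α N j m k := by
  rcases eq_or_ne k 1 with rfl | hk
  · simp [amatTerm, neumannIndex_natCast, hjm]
  · exact mul_nonneg (glCoeff_nonneg_of_ne_one h1 h2 hk)
      (add_nonneg (by split_ifs <;> norm_num) (by split_ifs <;> norm_num))

lemma Amat_nonneg_of_ne {σ : ℝ} (h1 : 1 < α) (h2 : α ≤ 2) (hσ : 0 < σ) {j m : Fin (N + 1)}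
    (hjm : j ≠ m) : 0 ≤ Amat α σ N j m := by
  rw [Amat_apply]
  exact mul_nonneg (amatScale_pos h1 h2 hσ N).le
    (tsum_nonneg (amatTerm_nonneg_of_ne h1.le h2 hjm))

lemma sum_Amat_row (h1 : 1 ≤ α) (h2 : α ≤ 2) (σ : ℝ) (j : Fin (N + 1)) :
    ∑ m, Amat α σ N j m = 0 := by
  simp only [Amat_apply, ← mul_sum]
  rw [← Summable.tsum_finsetSum fun m _ => summable_amatTerm h1 h2 j m]
  simp only [sum_amatTerm, tsum_mul_left, (hasSum_glCoeff h1 h2).tsum_eq, mul_zero]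

end GrunwaldLetnikovMatrix

namespace Matrix

variable {n : Type*}

lemma offDiag_one_sub_smul_nonpos [DecidableEq n] {A : Matrix n n ℝ}
    (hA : ∀ i j, i ≠ j → 0 ≤ A i j) {τ : ℝ} (hτ : 0 ≤ τ) (i j : n) (hij : i ≠ j) :
    (1 - τ • A) i j ≤ 0 := by
  simpa [one_apply_ne hij] using mul_nonneg hτ (hA i j hij)

variable [Fintype n] {M : Matrix n n ℝ}

/-- Discrete minimum principle: evaluate `M *ᵥ x` at an index where `x` is minimal. -/
lemma le_apply_of_le_mulVec (hoff : ∀ i j, i ≠ j → M i j ≤ 0) (hrow : ∀ i, ∑ j, M i j = 1)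
    {x : n → ℝ} {c : ℝ} (hc : ∀ i, c ≤ (M *ᵥ x) i) (i : n) : c ≤ x i := by
  obtain ⟨i₀, -, hmin⟩ := exists_min_image univ x ⟨i, mem_univ i⟩
  have hterm (j : n) : M i₀ j * x j ≤ M i₀ j * x i₀ := by
    rcases eq_or_ne i₀ j with rfl | hj
    · rfl
    · exact mul_le_mul_of_nonpos_left (hmin j (mem_univ j)) (hoff i₀ j hj)
  calc c ≤ (M *ᵥ x) i₀ := hc i₀
    _ = ∑ j, M i₀ j * x j := rfl
    _ ≤ ∑ j, M i₀ j * x i₀ := sum_le_sum fun j _ => hterm j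
    _ = x i₀ := by rw [← sum_mul, hrow, one_mul]
    _ ≤ x i := hmin i (mem_univ i)

lemma norm_le_norm_mulVec (hoff : ∀ i j, i ≠ j → M i j ≤ 0) (hrow : ∀ i, ∑ j, M i j = 1)
    (x : n → ℝ) : ‖x‖ ≤ ‖M *ᵥ x‖ := by
  have hlower (y : n → ℝ) (i : n) : -‖M *ᵥ y‖ ≤ y i :=
    le_apply_of_le_mulVec hoff hrow (fun j => neg_le_of_abs_le (norm_le_pi_norm (M *ᵥ y) j)) i
  refine (pi_norm_le_iff_of_nonneg (norm_nonneg _)).2 fun i => abs_le.2 ⟨hlower x i, ?_⟩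
  simpa [mulVec_neg] using hlower (-x) i

variable [DecidableEq n]

lemma sum_row_one_sub_smul {A : Matrix n n ℝ} (hA : ∀ i, ∑ j, A i j = 0) (τ : ℝ) (i : n) :
    ∑ j, (1 - τ • A) i j = 1 := by
  simp [one_apply, sum_sub_distrib, ← mul_sum, hA]

lemma isUnit_of_offDiag_nonpos_of_sum_row_eq_one (hoff : ∀ i j, i ≠ j → M i j ≤ 0)
    (hrow : ∀ i, ∑ j, M i j = 1) : IsUnit M := by
  refine mulVec_injective_iff_isUnit.1 fun x y hxy => ?_
  have h := norm_le_norm_mulVec hoff hrow (x - y)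
  rw [mulVec_sub, hxy, sub_self, norm_zero] at h
  exact sub_eq_zero.1 (norm_le_zero_iff.1 h)

lemma inv_apply_nonneg (hoff : ∀ i j, i ≠ j → M i j ≤ 0) (hrow : ∀ i, ∑ j, M i j = 1)
    (i j : n) : 0 ≤ M⁻¹ i j := by
  have hdet := (isUnit_iff_isUnit_det M).1 (isUnit_of_offDiag_nonpos_of_sum_row_eq_one hoff hrow)
  have hcol : M *ᵥ (M⁻¹ *ᵥ Pi.single j 1) = Pi.single j 1 := by
    rw [mulVec_mulVec, mul_nonsing_inv M hdet, one_mulVec]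
  have hsingle : (0 : n → ℝ) ≤ Pi.single j 1 := Pi.single_nonneg.2 zero_le_one
  have := le_apply_of_le_mulVec hoff hrow (x := M⁻¹ *ᵥ Pi.single j 1) (c := 0)
    (fun k => by rw [hcol]; exact hsingle k) i
  simpa [mulVec_single_one] using this

lemma sum_inv_row (hoff : ∀ i j, i ≠ j → M i j ≤ 0) (hrow : ∀ i, ∑ j, M i j = 1) (i : n) :
    ∑ j, M⁻¹ i j = 1 := by
  have hdet := (isUnit_iff_isUnit_det M).1 (isUnit_of_offDiag_nonpos_of_sum_row_eq_one hoff hrow)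
  have hone : M *ᵥ (fun _ => 1) = fun _ => 1 := funext fun i => by simp [mulVec, dotProduct, hrow]
  have := congrFun (congrArg (M⁻¹ *ᵥ ·) hone) i
  simp only [mulVec_mulVec, nonsing_inv_mul M hdet, one_mulVec] at this
  simpa [mulVec, dotProduct] using this.symm

lemma norm_inv_mulVec_le (hoff : ∀ i j, i ≠ j → M i j ≤ 0) (hrow : ∀ i, ∑ j, M i j = 1)
    (y : n → ℝ) : ‖M⁻¹ *ᵥ y‖ ≤ ‖y‖ := by
  have hdet := (isUnit_iff_isUnit_det M).1 (isUnit_of_offDiag_nonpos_of_sum_row_eq_one hoff hrow)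
  simpa [mulVec_mulVec, mul_nonsing_inv M hdet] using norm_le_norm_mulVec hoff hrow (M⁻¹ *ᵥ y)

lemma norm_pow_mulVec_le {B : Matrix n n ℝ} (hB : ∀ y, ‖B *ᵥ y‖ ≤ ‖y‖) (u : n → ℝ) (k : ℕ) :
    ‖(B ^ k) *ᵥ u‖ ≤ ‖u‖ := by
  induction k with
  | zero => simp
  | succ k ih => exact (pow_succ' B k ▸ mulVec_mulVec u B (B ^ k) ▸ hB _).trans ih

end Matrix

theorem implicit_euler_stable_general (α σ : ℝ) (hα : α ∈ Set.Ioc (1 : ℝ) 2) (hσ : 0 < σ)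
    (N : ℕ) (τ : ℝ) (hτ : 0 < τ) :
    IsUnit (1 - τ • Amat α σ N) ∧
    (∀ j m : Fin (N + 1), 0 ≤ (1 - τ • Amat α σ N)⁻¹ j m) ∧
    (Finset.univ.sup' Finset.univ_nonempty
        (fun j : Fin (N + 1) => ∑ m : Fin (N + 1), |(1 - τ • Amat α σ N)⁻¹ j m|)) = 1 ∧
    (∀ (u0 : Fin (N + 1) → ℝ) (n : ℕ),
      ‖(((1 - τ • Amat α σ N)⁻¹) ^ n).mulVec u0‖ ≤ ‖u0‖) := by
  obtain ⟨h1, h2⟩ := hα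
  have hoff := Matrix.offDiag_one_sub_smul_nonpos (A := Amat α σ N)
    (fun _ _ hjm => Amat_nonneg_of_ne h1 h2 hσ hjm) hτ.le
  have hrow := Matrix.sum_row_one_sub_smul (sum_Amat_row (N := N) h1.le h2 σ) τ
  have hnonneg := Matrix.inv_apply_nonneg hoff hrow
  have habs_row (j : Fin (N + 1)) : ∑ m, |(1 - τ • Amat α σ N)⁻¹ j m| = 1 := by
    simp only [abs_of_nonneg (hnonneg j _), Matrix.sum_inv_row hoff hrow j]
  refine ⟨Matrix.isUnit_of_offDiag_nonpos_of_sum_row_eq_one hoff hrow, hnonneg, ?_,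
    Matrix.norm_pow_mulVec_le (Matrix.norm_inv_mulVec_le hoff hrow)⟩
  simp only [habs_row, sup'_const]

/-- For every `τ > 0`, the matrix `I - τ A_{α,h}` is invertible, its inverse
has nonnegative entries, and its inverse has maximum absolute row sum (the operator norm
induced by the maximum norm) equal to `1`. Consequently the implicit Euler scheme
`u^{n+1} = (I - τ A_{α,h})⁻¹ u^n` is unconditionally stable in the maximum norm. -/
theorem implicit_euler_stable (α σ : ℝ) (hα : α ∈ Set.Ioc (1 : ℝ) 2) (hσ : 0 < σ)
    (N : ℕ) (hN : 1 ≤ N) (τ : ℝ) (hτ : 0 < τ) :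
    IsUnit (1 - τ • Amat α σ N) ∧
    (∀ j m : Fin (N + 1), 0 ≤ (1 - τ • Amat α σ N)⁻¹ j m) ∧
    (Finset.univ.sup' Finset.univ_nonempty
        (fun j : Fin (N + 1) => ∑ m : Fin (N + 1), |(1 - τ • Amat α σ N)⁻¹ j m|)) = 1 ∧
    (∀ (u0 : Fin (N + 1) → ℝ) (n : ℕ),
      ‖(((1 - τ • Amat α σ N)⁻¹) ^ n).mulVec u0‖ ≤ ‖u0‖) :=
  implicit_euler_stable_general α σ hα hσ N τ hτ
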